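/- arXiv:1811.03475 — 2 statements merged into one kernel-verified Lean document; each statement's English description precedes it below -/
import Mathlib

section
/- Let ν ≥ 0, n ∈ ℕ₀ and let f(x) = Σ_{k=0}^n f_k x^k be a real polynomial of degree at most n. Define the associated polynomial q(t) = Σ_{k=0}^n f_k (−1)^k k! t^k L_k^ν(t). Then for every x > 0, f(x) · ρ_ν(x) = ∫₀^∞ t^{ν−1} e^{-t - x/t} q(t) dt; equivalently f(x) = (1/ρ_ν(x)) ∫₀^∞ t^{ν−1} e^{-t - x/t} q(t) dt. -/
open MeasureTheory Real Set

/-- The scaled Macdonald function `ρ_ν(x) = ∫₀^∞ t^(ν-1) e^(-t - x/t) dt`. -/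
noncomputable def rho (ν : ℝ) (x : ℝ) : ℝ :=
  ∫ t in Ioi (0:ℝ), t ^ (ν - 1) * Real.exp (-t - x / t)

/-- The generalized (associated) Laguerre polynomial `L_n^ν`. -/
noncomputable def laguerre (n : ℕ) (ν : ℝ) (t : ℝ) : ℝ :=
  ∑ k ∈ Finset.range (n + 1), ((-1 : ℝ) ^ k / k.factorial) *
    (Real.Gamma (n + ν + 1) / (Real.Gamma (k + ν + 1) * (n - k).factorial)) * t ^ k

/-!
Integrating by parts against `t ^ (μ + 1)` gives the three-term recurrence
`ρ_{μ+2}(x) = (μ + 1) ρ_{μ+1}(x) + x ρ_μ(x)` for the moments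
`ρ_{ν+m}(x) = ∫₀^∞ t^(ν-1) e^(-t-x/t) t^m dt`. Iterating it writes `x^k ρ_ν(x)` as
`∑_j c_{k,j} ρ_{ν+k+j}(x)`, where the `c_{k,j}` are the coefficients of
`(-1)^k k! t^k L_k^ν(t) = ∑_j c_{k,j} t^(k+j)`: by Pascal's rule and `Γ(s + 1) = s Γ(s)` they
satisfy exactly the recursion that multiplication by `x` induces. So `x^k ρ_ν(x)` is the integral
of the weight against that polynomial, and the theorem follows by linearity in `f`.
-/

open Filter Topology Finset

lemma inv_exp_div_le {x t : ℝ} (hx : 0 < x) (ht : 0 < t) (m : ℕ) :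
    (exp (x / t))⁻¹ ≤ m.factorial * t ^ m / x ^ m := by
  have hpos : 0 < (x / t) ^ m / m.factorial := by positivity
  calc (exp (x / t))⁻¹ ≤ ((x / t) ^ m / m.factorial)⁻¹ :=
        inv_anti₀ hpos (pow_div_factorial_le_exp _ (by positivity) m)
    _ = m.factorial * t ^ m / x ^ m := by rw [div_pow]; field_simp

lemma integrableOn_rpow_mul_exp_neg_sub_div (μ : ℝ) {x : ℝ} (hx : 0 < x) :
    IntegrableOn (fun t ↦ t ^ (μ - 1) * exp (-t - x / t)) (Ioi 0) := by
  -- `e^(-x/t) ≤ m! (t/x)^m` removes the singularity of `t^(μ-1)` at `0`, leaving a Gamma integrand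
  obtain ⟨m, hm⟩ := exists_nat_gt (1 - μ)
  have hGamma : IntegrableOn (fun t ↦ (m.factorial / x ^ m) * (exp (-t) * t ^ (μ + m - 1)))
      (Ioi 0) := (GammaIntegral_convergent (by linarith)).const_mul _
  refine hGamma.mono' ?_ ?_
  · refine ContinuousOn.aestronglyMeasurable (fun t ht ↦ ContinuousAt.continuousWithinAt ?_)
      measurableSet_Ioi
    have ht : t ≠ 0 := ne_of_gt ht
    fun_prop (disch := simp [ht])
  · filter_upwards [self_mem_ae_restrict measurableSet_Ioi] with t (ht : 0 < t)
    rw [norm_of_nonneg (by positivity)]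
    calc t ^ (μ - 1) * exp (-t - x / t) = exp (-t) * t ^ (μ - 1) * (exp (x / t))⁻¹ := by
          rw [exp_sub]; ring
      _ ≤ exp (-t) * t ^ (μ - 1) * (m.factorial * t ^ m / x ^ m) := by
          gcongr; exact inv_exp_div_le hx ht m
      _ = (m.factorial / x ^ m) * (exp (-t) * t ^ (μ + m - 1)) := by
          rw [show μ + m - 1 = μ - 1 + m by ring, rpow_add ht, rpow_natCast]; ring

lemma tendsto_rpow_mul_exp_neg_sub_div_nhdsGT_zero (μ : ℝ) {x : ℝ} (hx : 0 < x) :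
    Tendsto (fun t ↦ t ^ μ * exp (-t - x / t)) (𝓝[>] 0) (𝓝 0) := by
  have hinv : Tendsto (fun t : ℝ ↦ t⁻¹ ^ (-μ) * exp (-x * t⁻¹)) (𝓝[>] 0) (𝓝 0) :=
    (tendsto_rpow_mul_exp_neg_mul_atTop_nhds_zero (-μ) x hx).comp tendsto_inv_nhdsGT_zero
  have hexp : Tendsto (fun t : ℝ ↦ exp (-t)) (𝓝[>] 0) (𝓝 1) := by
    have : Continuous fun t : ℝ ↦ exp (-t) := by fun_prop
    simpa using (this.tendsto 0).mono_left nhdsWithin_le_nhds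
  have hprod := hinv.mul hexp
  rw [zero_mul] at hprod
  refine hprod.congr' ?_
  filter_upwards [self_mem_nhdsWithin] with t (ht : 0 < t)
  rw [inv_rpow ht.le, rpow_neg ht.le, inv_inv, sub_eq_add_neg (-t), exp_add, div_eq_mul_inv]
  ring_nf

lemma tendsto_rpow_mul_exp_neg_sub_div_atTop (μ x : ℝ) :
    Tendsto (fun t ↦ t ^ μ * exp (-t - x / t)) atTop (𝓝 0) := by
  have hdiv : Tendsto (fun t : ℝ ↦ x / t) atTop (𝓝 0) := tendsto_const_nhds.div_atTop tendsto_id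
  have hexp : Tendsto (fun t : ℝ ↦ (exp (x / t))⁻¹) atTop (𝓝 1) := by
    simpa using ((continuous_exp.tendsto 0).comp hdiv).inv₀ (by simp)
  have hprod := (tendsto_rpow_mul_exp_neg_mul_atTop_nhds_zero μ 1 one_pos).mul hexp
  rw [zero_mul] at hprod
  refine hprod.congr fun t ↦ ?_
  rw [exp_sub, neg_one_mul]; ring

lemma rho_add_two (μ : ℝ) {x : ℝ} (hx : 0 < x) :
    rho (μ + 2) x = (μ + 1) * rho (μ + 1) x + x * rho μ x := by
  have hu : ∀ t ∈ Ioi (0 : ℝ), HasDerivAt (fun s ↦ s ^ (μ + 1)) ((μ + 1) * t ^ μ) t :=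
    fun t ht ↦ by simpa using hasDerivAt_rpow_const (p := μ + 1) (Or.inl (ne_of_gt ht))
  have hv : ∀ t ∈ Ioi (0 : ℝ), HasDerivAt (fun s ↦ exp (-s - x / s))
      (exp (-t - x / t) * (x / t ^ 2 - 1)) t := fun t (ht : 0 < t) ↦ by
    have h := (hasDerivAt_neg' t).sub ((hasDerivAt_const t x).div (hasDerivAt_id' t) ht.ne')
    exact (h.congr_deriv (by ring)).exp
  have hparts : EqOn (fun t ↦ (μ + 1) * t ^ μ * exp (-t - x / t)
        + t ^ (μ + 1) * (exp (-t - x / t) * (x / t ^ 2 - 1)))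
      (fun t ↦ (μ + 1) * (t ^ (μ + 1 - 1) * exp (-t - x / t))
        + x * (t ^ (μ - 1) * exp (-t - x / t)) - t ^ (μ + 2 - 1) * exp (-t - x / t)) (Ioi 0) :=
    fun t (ht : 0 < t) ↦ by
      simp only [add_sub_cancel_right, show μ + 2 - 1 = μ + 1 by ring, rpow_add_one ht.ne',
        rpow_sub_one ht.ne']
      field_simp
      ring
  have h₁ := (integrableOn_rpow_mul_exp_neg_sub_div (μ + 1) hx).const_mul (μ + 1)
  have h₀ := (integrableOn_rpow_mul_exp_neg_sub_div μ hx).const_mul x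
  have h₂ := integrableOn_rpow_mul_exp_neg_sub_div (μ + 2) hx
  have hzero := integral_Ioi_deriv_mul_eq_sub hu hv
    (IntegrableOn.congr_fun (Integrable.sub' (h₁.fun_add h₀) h₂) hparts.symm measurableSet_Ioi)
    (tendsto_rpow_mul_exp_neg_sub_div_nhdsGT_zero (μ + 1) hx)
    (tendsto_rpow_mul_exp_neg_sub_div_atTop (μ + 1) x)
  rw [setIntegral_congr_fun measurableSet_Ioi hparts, integral_sub (h₁.fun_add h₀) h₂,
    integral_add h₁ h₀, integral_const_mul, integral_const_mul] at hzero
  simp only [rho]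
  linarith

lemma rpow_mul_exp_neg_sub_div_mul_pow_eqOn (ν x : ℝ) (m : ℕ) :
    EqOn (fun t ↦ t ^ (ν - 1) * exp (-t - x / t) * t ^ m)
      (fun t ↦ t ^ (ν + m - 1) * exp (-t - x / t)) (Ioi 0) := fun t (ht : 0 < t) ↦ by
  simp only [show ν + m - 1 = ν - 1 + m by ring, rpow_add ht, rpow_natCast]
  ring

lemma integrableOn_rpow_mul_exp_neg_sub_div_mul_pow (ν : ℝ) {x : ℝ} (hx : 0 < x) (m : ℕ) :
    IntegrableOn (fun t ↦ t ^ (ν - 1) * exp (-t - x / t) * t ^ m) (Ioi 0) :=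
  (integrableOn_rpow_mul_exp_neg_sub_div (ν + m) hx).congr_fun
    (rpow_mul_exp_neg_sub_div_mul_pow_eqOn ν x m).symm measurableSet_Ioi

lemma integral_rpow_mul_exp_neg_sub_div_mul_pow (ν x : ℝ) (m : ℕ) :
    ∫ t in Ioi 0, t ^ (ν - 1) * exp (-t - x / t) * t ^ m = rho (ν + m) x :=
  setIntegral_congr_fun measurableSet_Ioi (rpow_mul_exp_neg_sub_div_mul_pow_eqOn ν x m)

/-- The coefficient of `t ^ (k + j)` in `(-1) ^ k * k! * t ^ k * L_k^ν(t)`. -/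
noncomputable def laguerreCoeff (ν : ℝ) (k j : ℕ) : ℝ :=
  (-1) ^ (k + j) * k.choose j * (Gamma (k + ν + 1) / Gamma (j + ν + 1))

lemma neg_one_pow_mul_factorial_mul_pow_mul_laguerre (k : ℕ) (ν t : ℝ) :
    (-1) ^ k * k.factorial * t ^ k * laguerre k ν t
      = ∑ j ∈ range (k + 1), laguerreCoeff ν k j * t ^ (k + j) := by
  rw [laguerre, mul_sum]
  refine sum_congr rfl fun j hj ↦ ?_
  rw [laguerreCoeff, Nat.cast_choose ℝ (Nat.le_of_lt_succ (mem_range.mp hj))]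
  ring

lemma laguerreCoeff_of_lt {ν : ℝ} {k j : ℕ} (h : k < j) : laguerreCoeff ν k j = 0 := by
  simp [laguerreCoeff, Nat.choose_eq_zero_of_lt h]

lemma rpow_mul_exp_neg_sub_div_mul_laguerre (k : ℕ) (ν x t : ℝ) :
    t ^ (ν - 1) * exp (-t - x / t) * ((-1) ^ k * k.factorial * t ^ k * laguerre k ν t)
      = ∑ j ∈ range (k + 1),
          laguerreCoeff ν k j * (t ^ (ν - 1) * exp (-t - x / t) * t ^ (k + j)) := by
  rw [neg_one_pow_mul_factorial_mul_pow_mul_laguerre, mul_sum]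
  exact sum_congr rfl fun j _ ↦ by ring

lemma integrableOn_rpow_mul_exp_neg_sub_div_mul_laguerre (k : ℕ) (ν : ℝ) {x : ℝ} (hx : 0 < x) :
    IntegrableOn (fun t ↦ t ^ (ν - 1) * exp (-t - x / t)
      * ((-1) ^ k * k.factorial * t ^ k * laguerre k ν t)) (Ioi 0) := by
  simp only [rpow_mul_exp_neg_sub_div_mul_laguerre]
  exact integrable_finsetSum _ fun j _ ↦
    (integrableOn_rpow_mul_exp_neg_sub_div_mul_pow ν hx (k + j)).const_mul _

section

variable {ν : ℝ} (hν : -1 < ν)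
include hν

lemma natCast_add_add_one_pos (i : ℕ) : 0 < (i : ℝ) + ν + 1 := by
  linarith [(Nat.cast_nonneg i : (0 : ℝ) ≤ i)]

lemma Gamma_natCast_succ_add_add_one (i : ℕ) :
    Gamma ((i + 1 : ℕ) + ν + 1) = (i + ν + 1) * Gamma (i + ν + 1) := by
  rw [Nat.cast_succ, add_right_comm _ 1, Gamma_add_one (natCast_add_add_one_pos hν i).ne']

lemma laguerreCoeff_zero_zero : laguerreCoeff ν 0 0 = 1 := by
  have hG : Gamma (ν + 1) ≠ 0 := (Gamma_pos_of_pos (by linarith)).ne'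
  simp [laguerreCoeff, hG]

lemma laguerreCoeff_succ_zero (k : ℕ) :
    laguerreCoeff ν (k + 1) 0 = -((ν + k + 1) * laguerreCoeff ν k 0) := by
  simp only [laguerreCoeff, Gamma_natCast_succ_add_add_one hν, Nat.choose_zero_right]
  push_cast
  ring

lemma laguerreCoeff_succ_succ (k j : ℕ) :
    laguerreCoeff ν (k + 1) (j + 1)
      = laguerreCoeff ν k j - (ν + k + j + 2) * laguerreCoeff ν k (j + 1) := by
  have hpascal : ((k + 1).choose (j + 1) : ℝ) = k.choose j + k.choose (j + 1) := by
    exact_mod_cast Nat.choose_succ_succ' k j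
  have habsorb : ((k + 1 : ℕ) : ℝ) * k.choose j = (k + 1).choose (j + 1) * (j + 1 : ℕ) := by
    exact_mod_cast Nat.add_one_mul_choose_eq k j
  rw [hpascal] at habsorb
  simp only [laguerreCoeff, Gamma_natCast_succ_add_add_one hν, hpascal]
  have hG := (Gamma_pos_of_pos (natCast_add_add_one_pos hν j)).ne'
  have hj := (natCast_add_add_one_pos hν j).ne'
  push_cast at habsorb ⊢
  field_simp
  linear_combination ((-1) ^ (k + j) * Gamma (k + ν + 1)) * habsorb

lemma mul_sum_laguerreCoeff_mul {x : ℝ} {r : ℕ → ℝ}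
    (hr : ∀ i, x * r i = r (i + 2) - (ν + i + 1) * r (i + 1)) (k : ℕ) :
    x * ∑ j ∈ range (k + 1), laguerreCoeff ν k j * r (k + j)
      = ∑ j ∈ range (k + 2), laguerreCoeff ν (k + 1) j * r (k + 1 + j) := by
  set g : ℕ → ℝ := fun j ↦ (ν + (k + j : ℕ) + 1) * laguerreCoeff ν k j * r (k + j + 1)
  have hshift : ∑ j ∈ range (k + 1), g j = ∑ j ∈ range (k + 1), g (j + 1) + g 0 := by
    have hg_top : g (k + 1) = 0 := by simp [g, laguerreCoeff_of_lt (Nat.lt_succ_self k)]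
    rw [← sum_range_succ', sum_range_succ _ (k + 1), hg_top, add_zero]
  calc x * ∑ j ∈ range (k + 1), laguerreCoeff ν k j * r (k + j)
      = ∑ j ∈ range (k + 1), laguerreCoeff ν k j * r (k + j + 2) - ∑ j ∈ range (k + 1), g j := by
        rw [mul_sum, ← sum_sub_distrib]
        refine sum_congr rfl fun j _ ↦ ?_
        rw [mul_left_comm, hr]
        simp only [g]
        push_cast
        ring
    _ = ∑ j ∈ range (k + 1), laguerreCoeff ν (k + 1) (j + 1) * r (k + 1 + (j + 1))
          + laguerreCoeff ν (k + 1) 0 * r (k + 1 + 0) := by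
        rw [hshift, ← sub_sub, ← sum_sub_distrib, sub_eq_add_neg]
        congr 1
        · refine sum_congr rfl fun j _ ↦ ?_
          simp only [g, laguerreCoeff_succ_succ hν]
          rw [show k + (j + 1) + 1 = k + j + 2 by ring, show k + 1 + (j + 1) = k + j + 2 by ring]
          push_cast
          ring
        · simp only [g, laguerreCoeff_succ_zero hν]
          push_cast
          ring
    _ = ∑ j ∈ range (k + 2), laguerreCoeff ν (k + 1) j * r (k + 1 + j) :=
        (sum_range_succ' (fun j ↦ laguerreCoeff ν (k + 1) j * r (k + 1 + j)) _).symm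

lemma pow_mul_rho {x : ℝ} (hx : 0 < x) (k : ℕ) :
    x ^ k * rho ν x = ∑ j ∈ range (k + 1), laguerreCoeff ν k j * rho (ν + (k + j : ℕ)) x := by
  induction k with
  | zero => simp [laguerreCoeff_zero_zero hν]
  | succ k ih =>
    have hr : ∀ i : ℕ, x * rho (ν + i) x
        = rho (ν + (i + 2 : ℕ)) x - (ν + i + 1) * rho (ν + (i + 1 : ℕ)) x := fun i ↦ by
      have := rho_add_two (ν + i) hx
      push_cast
      rw [← add_assoc, ← add_assoc]
      linarith
    rw [pow_succ', mul_assoc, ih, mul_sum_laguerreCoeff_mul hν hr k]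

lemma integral_rpow_mul_exp_neg_sub_div_mul_laguerre {x : ℝ} (hx : 0 < x) (k : ℕ) :
    ∫ t in Ioi 0, t ^ (ν - 1) * exp (-t - x / t)
      * ((-1) ^ k * k.factorial * t ^ k * laguerre k ν t) = x ^ k * rho ν x := by
  simp only [rpow_mul_exp_neg_sub_div_mul_laguerre]
  rw [integral_finsetSum _ fun j _ ↦
    (integrableOn_rpow_mul_exp_neg_sub_div_mul_pow ν hx (k + j)).const_mul _, pow_mul_rho hν hx]
  simp only [integral_const_mul, integral_rpow_mul_exp_neg_sub_div_mul_pow]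

end

theorem polynomial_associated_representation (ν : ℝ) (hν : 0 ≤ ν) (n : ℕ) (f : ℕ → ℝ)
    (x : ℝ) (hx : 0 < x) :
    (∑ k ∈ Finset.range (n + 1), f k * x ^ k) * rho ν x
      = ∫ t in Ioi (0:ℝ), t ^ (ν - 1) * Real.exp (-t - x / t) *
          (∑ k ∈ Finset.range (n + 1), f k * (-1 : ℝ) ^ k * k.factorial * t ^ k * laguerre k ν t) := by
  have hν' : -1 < ν := by linarith
  calc (∑ k ∈ range (n + 1), f k * x ^ k) * rho ν x
      = ∑ k ∈ range (n + 1), f k * ∫ t in Ioi 0, t ^ (ν - 1) * exp (-t - x / t)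
          * ((-1) ^ k * k.factorial * t ^ k * laguerre k ν t) := by
        rw [sum_mul]
        exact sum_congr rfl fun k _ ↦ by
          rw [integral_rpow_mul_exp_neg_sub_div_mul_laguerre hν' hx, mul_assoc]
    _ = ∫ t in Ioi 0, ∑ k ∈ range (n + 1), f k * (t ^ (ν - 1) * exp (-t - x / t)
          * ((-1) ^ k * k.factorial * t ^ k * laguerre k ν t)) := by
        rw [integral_finsetSum _ fun k _ ↦
          (integrableOn_rpow_mul_exp_neg_sub_div_mul_laguerre k ν hx).const_mul _]
        simp only [integral_const_mul]
    _ = _ := by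
        simp only [mul_sum]
        exact setIntegral_congr_fun measurableSet_Ioi fun t _ ↦ sum_congr rfl fun k _ ↦ by ring
end

section
/- Let ν ≥ 0, α > −1, and let (P_n)_{n∈ℕ₀} be a sequence of real polynomials with deg P_n = n satisfying the orthonormality ∫₀^∞ P_n(x) P_m(x) x^α ρ_ν(x) dx = δ_{n,m} for all n, m ∈ ℕ₀. Then for every n ∈ ℕ₀, ∫₀^∞ [P_n(x)]² x^α ρ_{ν+1}(x) dx = 2n + 1 + ν + α. -/
open MeasureTheory Real Set

/-!
By Tonelli, the weight has explicit moments `∫₀^∞ x^s ρ_ν(x) dx = Γ(s+1) Γ(s+ν+1)`, so the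
functional `ℒ_ν(q) = ∫₀^∞ q(x) x^α ρ_ν(x) dx` sends `Xᵏ` to `Γ(k+α+1) Γ(k+α+ν+1)`.
The functional equation `Γ(z+1) = z Γ(z)` then gives
`ℒ_{ν+1}(q) = (α+ν+1) ℒ_ν(q) + ℒ_ν(x q')`. For `q = P_n²` the last term is
`2 ℒ_ν(P_n · x P_n')`, and `x P_n' - n P_n` has degree `< n`, hence is orthogonal to `P_n`;
so `ℒ_ν(P_n · x P_n') = n ℒ_ν(P_n²) = n`.
-/

open Polynomial

section Moments

variable {ν s t : ℝ}

theorem rpow_mul_rho_integrand_eq (x : ℝ) :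
    x ^ s * (t ^ (ν - 1) * exp (-t - x / t))
      = t ^ (ν - 1) * exp (-t) * (x ^ s * exp (-t⁻¹ * x ^ (1 : ℝ))) := by
  rw [rpow_one, mul_mul_mul_comm, ← exp_add, div_eq_inv_mul]
  ring_nf

theorem integrableOn_rpow_mul_rho_integrand (hs : -1 < s) (ht : 0 < t) :
    IntegrableOn (fun x => x ^ s * (t ^ (ν - 1) * exp (-t - x / t))) (Ioi 0) := by
  simp_rw [rpow_mul_rho_integrand_eq]
  exact (integrableOn_rpow_mul_exp_neg_mul_rpow hs one_pos (inv_pos.2 ht)).const_mul _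

theorem integral_rpow_mul_rho_integrand (hs : -1 < s) (ht : 0 < t) :
    ∫ x in Ioi 0, x ^ s * (t ^ (ν - 1) * exp (-t - x / t))
      = Gamma (s + 1) * (exp (-t) * t ^ (s + ν + 1 - 1)) := by
  simp_rw [rpow_mul_rho_integrand_eq]
  rw [integral_const_mul, integral_rpow_mul_exp_neg_mul_rpow one_pos hs (inv_pos.2 ht),
    inv_rpow ht.le, ← rpow_neg ht.le]
  simp only [div_one, neg_neg, mul_one]
  rw [show s + ν + 1 - 1 = (ν - 1) + (s + 1) by ring, rpow_add ht (ν - 1)]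
  ring

theorem integrable_rpow_mul_rho_integrand_prod (hs : -1 < s) (hsν : -1 < s + ν) :
    Integrable (fun p : ℝ × ℝ => p.1 ^ s * (p.2 ^ (ν - 1) * exp (-p.2 - p.1 / p.2)))
      ((volume.restrict (Ioi 0)).prod (volume.restrict (Ioi 0))) := by
  refine (integrable_prod_iff' (by fun_prop : Measurable _).aestronglyMeasurable).2 ⟨?_, ?_⟩
  · filter_upwards [self_mem_ae_restrict measurableSet_Ioi] with t ht
    exact integrableOn_rpow_mul_rho_integrand hs ht
  · refine ((GammaIntegral_convergent (by linarith : 0 < s + ν + 1)).const_mul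
      (Gamma (s + 1))).congr ?_
    filter_upwards [self_mem_ae_restrict measurableSet_Ioi] with t (ht : 0 < t)
    rw [← integral_rpow_mul_rho_integrand hs ht]
    refine setIntegral_congr_fun measurableSet_Ioi fun x (hx : 0 < x) => ?_
    rw [norm_of_nonneg (by positivity)]

theorem integrableOn_rpow_mul_rho (hs : -1 < s) (hsν : -1 < s + ν) :
    IntegrableOn (fun x => x ^ s * rho ν x) (Ioi 0) := by
  have h := (integrable_rpow_mul_rho_integrand_prod hs hsν).integral_prod_left
  simp only [integral_const_mul] at h
  exact h

theorem integral_rpow_mul_rho (hs : -1 < s) (hsν : -1 < s + ν) :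
    ∫ x in Ioi 0, x ^ s * rho ν x = Gamma (s + 1) * Gamma (s + ν + 1) := by
  simp only [rho, ← integral_const_mul]
  rw [integral_integral_swap (integrable_rpow_mul_rho_integrand_prod hs hsν),
    setIntegral_congr_fun measurableSet_Ioi fun t (ht : 0 < t) =>
      integral_rpow_mul_rho_integrand hs ht,
    integral_const_mul, ← Gamma_eq_integral (by linarith)]

end Moments

section OrthonormalSequence

variable {R K : Type*} [CommRing R] [Field K]

theorem degree_X_mul_derivative_sub_C_mul_lt (p : R[X]) :
    (X * derivative p - C (p.natDegree : R) * p).degree < (p.natDegree : WithBot ℕ) := by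
  refine (degree_lt_iff_coeff_zero _ _).2 fun m hm => ?_
  rcases m with _ | m
  · simp [Nat.le_zero.1 hm]
  · rw [coeff_sub, coeff_X_mul, coeff_derivative, coeff_C_mul]
    rcases hm.eq_or_lt with hd | hd
    · rw [hd]; push_cast; ring
    · simp [coeff_eq_zero_of_natDegree_lt hd]

variable (L : K[X] →ₗ[K] K) {P : ℕ → K[X]}

theorem map_mul_eq_zero_of_degree_lt (hdeg : ∀ n, (P n).natDegree = n)
    (horth : ∀ n m, L (P n * P m) = if n = m then 1 else 0) {n : ℕ} {q : K[X]}
    (hq : q.degree < n) :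
    L (P n * q) = 0 := by
  have hP : ∀ i, P i ≠ 0 := fun i h => by simpa [h] using horth i i
  let S : Sequence K := ⟨P, fun i => by rw [degree_eq_natDegree (hP i), hdeg]⟩
  have hspan : q ∈ Submodule.span K (P '' Iio n) := by
    rw [S.span_degreeLT fun i _ => (leadingCoeff_ne_zero.2 (hP i)).isUnit]
    exact mem_degreeLT.2 hq
  refine Submodule.span_le (p := LinearMap.ker (L ∘ₗ LinearMap.mulLeft K (P n))).2 ?_ hspan
  rintro _ ⟨m, hm, rfl⟩
  simp [horth, (show m < n from hm).ne']

theorem map_mul_X_mul_derivative_self (hdeg : ∀ n, (P n).natDegree = n)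
    (horth : ∀ n m, L (P n * P m) = if n = m then 1 else 0) (n : ℕ) :
    L (P n * (X * derivative (P n))) = n := by
  have hlow : (X * derivative (P n) - C (n : K) * P n).degree < (n : WithBot ℕ) := by
    simpa only [hdeg] using degree_X_mul_derivative_sub_C_mul_lt (P n)
  have hsplit : X * derivative (P n)
      = C (n : K) * P n + (X * derivative (P n) - C (n : K) * P n) := by
    ring
  rw [hsplit, mul_add, map_add, map_mul_eq_zero_of_degree_lt L hdeg horth hlow,
    mul_left_comm, ← smul_eq_C_mul, map_smul, horth]
  simp

end OrthonormalSequence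

section MomentFunctional

variable {ν α : ℝ}

noncomputable def rhoMomentFunctional (ν α : ℝ) : ℝ[X] →ₗ[ℝ] ℝ :=
  lsum fun k => (Gamma (k + α + 1) * Gamma (k + α + ν + 1)) • LinearMap.id

theorem rhoMomentFunctional_monomial (k : ℕ) (c : ℝ) :
    rhoMomentFunctional ν α (monomial k c)
      = c * (Gamma (k + α + 1) * Gamma (k + α + ν + 1)) := by
  simp [rhoMomentFunctional, mul_comm]

theorem rhoMomentFunctional_add_one (hαν : -1 < α + ν) (q : ℝ[X]) :
    rhoMomentFunctional (ν + 1) α q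
      = (α + ν + 1) * rhoMomentFunctional ν α q
        + rhoMomentFunctional ν α (X * derivative q) := by
  induction q using Polynomial.induction_on' with
  | add p q hp hq => simp only [map_add, mul_add, hp, hq]; ring
  | monomial k c =>
    have hX : X * derivative (monomial k c) = monomial k (c * k) := by
      rcases k with _ | k
      · simp
      · rw [derivative_monomial, X_mul_monomial]; rfl
    have hΓ : Gamma (k + α + (ν + 1) + 1) = (k + α + ν + 1) * Gamma (k + α + ν + 1) := by
      rw [← Gamma_add_one (by linarith [k.cast_nonneg (α := ℝ)])]; ring_nf
    rw [hX, rhoMomentFunctional_monomial, rhoMomentFunctional_monomial,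
      rhoMomentFunctional_monomial, hΓ]
    ring

theorem eval_monomial_mul_rpow_mul {x : ℝ} (hx : 0 < x) (k : ℕ) (c y : ℝ) :
    (monomial k c).eval x * x ^ α * y = c * (x ^ ((k : ℝ) + α) * y) := by
  rw [eval_monomial, rpow_add hx, rpow_natCast]
  ring

theorem integrableOn_eval_mul_rpow_mul_rho (hα : -1 < α) (hαν : -1 < α + ν) (q : ℝ[X]) :
    IntegrableOn (fun x => q.eval x * x ^ α * rho ν x) (Ioi 0) := by
  induction q using Polynomial.induction_on' with
  | add p q hp hq =>
    refine (hp.add hq).congr_fun (fun x _ => ?_) measurableSet_Ioi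
    simp only [Pi.add_apply, eval_add, add_mul]
  | monomial k c =>
    have hk : (0 : ℝ) ≤ k := k.cast_nonneg
    refine IntegrableOn.congr_fun
      ((integrableOn_rpow_mul_rho (by linarith) (by linarith)).const_mul c)
      (fun x (hx : 0 < x) => (eval_monomial_mul_rpow_mul hx k c _).symm) measurableSet_Ioi

theorem integral_eval_mul_rpow_mul_rho (hα : -1 < α) (hαν : -1 < α + ν) (q : ℝ[X]) :
    ∫ x in Ioi 0, q.eval x * x ^ α * rho ν x = rhoMomentFunctional ν α q := by
  induction q using Polynomial.induction_on' with
  | add p q hp hq =>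
    simp only [eval_add, add_mul, map_add]
    rw [integral_add (integrableOn_eval_mul_rpow_mul_rho hα hαν p)
      (integrableOn_eval_mul_rpow_mul_rho hα hαν q), hp, hq]
  | monomial k c =>
    have hk : (0 : ℝ) ≤ k := k.cast_nonneg
    rw [setIntegral_congr_fun measurableSet_Ioi fun x (hx : 0 < x) =>
      eval_monomial_mul_rpow_mul hx k c _, integral_const_mul,
      integral_rpow_mul_rho (by linarith) (by linarith), rhoMomentFunctional_monomial]

end MomentFunctional

theorem squared_norm_against_next_weight
    (ν α : ℝ) (hν : 0 ≤ ν) (hα : -1 < α) (P : ℕ → Polynomial ℝ)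
    (hdeg : ∀ n, (P n).natDegree = n)
    (horth : ∀ n m : ℕ,
      ∫ x in Ioi (0:ℝ), (P n).eval x * (P m).eval x * x ^ α * rho ν x
        = if n = m then 1 else 0) (n : ℕ) :
    ∫ x in Ioi (0:ℝ), ((P n).eval x) ^ 2 * x ^ α * rho (ν + 1) x
      = 2 * n + 1 + ν + α := by
  have hαν : -1 < α + ν := by linarith
  have hL : ∀ n m, rhoMomentFunctional ν α (P n * P m) = if n = m then 1 else 0 := fun n m => by
    rw [← integral_eval_mul_rpow_mul_rho hα hαν, ← horth]
    simp only [eval_mul]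
  calc ∫ x in Ioi 0, (P n).eval x ^ 2 * x ^ α * rho (ν + 1) x
      = rhoMomentFunctional (ν + 1) α (P n * P n) := by
        rw [← integral_eval_mul_rpow_mul_rho hα (by linarith)]
        simp only [eval_mul, sq]
    _ = (α + ν + 1) * rhoMomentFunctional ν α (P n * P n)
          + 2 * rhoMomentFunctional ν α (P n * (X * derivative (P n))) := by
        rw [rhoMomentFunctional_add_one hαν, derivative_mul, two_mul, ← map_add]
        ring_nf
    _ = 2 * n + 1 + ν + α := by
        rw [hL, if_pos rfl, map_mul_X_mul_derivative_self _ hdeg hL]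
        ring
end
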